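/- (Energy monotonicity of the continuous-valued quaternionic Hopfield network.) Let σ_act(q) = q/‖q‖ for nonzero quaternions q, with state set the unit sphere S = { p ∈ ℍ : ‖p‖ = 1 }. Let N ≥ 1 and let (w_ij) be an N×N quaternion matrix with w_ij = star(w_ji) for all i, j, and with each diagonal entry w_ii a nonnegative real number. For every update schedule σ : ℕ → {1,…,N} and every initial state x(0) ∈ S^N, consider the asynchronous trajectory defined by x_i(t+1) = σ_act(v_i(t)) if i = σ(t) and v_i(t) ≠ 0, and x_i(t+1) = x_i(t) otherwise, where v_i(t) = Σⱼ w_ij * x_j(t). Then the energy E(x(t)) = −(1/2) Σᵢ Σⱼ Re(star(x_i(t)) * (w_ij * x_j(t))) is nonincreasing in t, strictly decreases whenever x(t+1) ≠ x(t), and the real sequence (E(x(t)))_{t≥0} converges. -/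

import Mathlib

/-!
Writing `⟪p, q⟫ = Re (star p * q)` for the real inner product of `ℍ`, hermitian symmetry of `w`
shows that changing neuron `k` from `a` to `b = a + d` changes the energy by
`-⟪d, v_k⟫ - ⟪d, w_kk d⟫ / 2`. For `b = v_k / ‖v_k‖` and `‖a‖ = ‖b‖ = 1` one has
`⟪d, v_k⟫ = ‖v_k‖ (1 - ⟪a, b⟫) = ‖v_k‖ ‖d‖² / 2`, so the energy drops by
`(‖v_k‖ + w_kk) ‖d‖² / 2 ≥ 0`, strictly when the state moves. States stay on the unit sphere,
where the energy is bounded below by `-½ Σ ‖w_ij‖`; a nonincreasing bounded sequence converges.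
-/

open Matrix Quaternion
open scoped InnerProductSpace

namespace Quaternion

theorem re_sum {α : Type*} (s : Finset α) (f : α → ℍ) : (∑ i ∈ s, f i).re = ∑ i ∈ s, (f i).re :=
  map_sum (QuaternionAlgebra.reₗ _ _ _) f s

theorem re_star_mul_eq_inner (a b : ℍ) : (star a * b).re = ⟪a, b⟫_ℝ := by
  simp [inner_def, re_mul]

theorem inner_coe_mul_self (r : ℝ) (d : ℍ) : ⟪d, (r : ℍ) * d⟫_ℝ = r * ‖d‖ ^ 2 := by
  rw [coe_mul_eq_smul, real_inner_smul_right, real_inner_self_eq_norm_sq]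

end Quaternion

theorem real_inner_inv_norm_smul_sub_eq {E : Type*} [NormedAddCommGroup E] [InnerProductSpace ℝ E]
    {a : E} (ha : ‖a‖ = 1) (v : E) :
    ⟪‖v‖⁻¹ • v - a, v⟫_ℝ = ‖v‖ / 2 * ‖‖v‖⁻¹ • v - a‖ ^ 2 := by
  rcases eq_or_ne v 0 with rfl | hv
  · simp
  set b := ‖v‖⁻¹ • v
  have hb : ‖b‖ = 1 := norm_smul_inv_norm hv
  have hvb : v = ‖v‖ • b := by simp [b, smul_smul, norm_ne_zero_iff.2 hv]
  rw [norm_sub_sq_real, hb, ha]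
  conv_lhs => rw [hvb]
  rw [inner_smul_right, inner_sub_left, real_inner_self_eq_norm_sq, hb, real_inner_comm]
  ring

theorem Matrix.IsHermitian.re_star_dotProduct_mulVec_comm {ι : Type*} [Fintype ι]
    {w : Matrix ι ι ℍ} (hw : w.IsHermitian) (y z : ι → ℍ) :
    (star y ⬝ᵥ w *ᵥ z).re = (star z ⬝ᵥ w *ᵥ y).re := by
  rw [← Quaternion.re_star, star_dotProduct, star_star, star_mulVec, hw.eq, dotProduct_mulVec]

section Hopfield

variable {ι : Type*} [Fintype ι]

noncomputable def hopfieldEnergy (w : Matrix ι ι ℍ) (y : ι → ℍ) : ℝ :=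
  -(1/2) * ∑ i, ∑ j, (star (y i) * (w i j * y j)).re

open Classical in
noncomputable def hopfieldUpdate (w : Matrix ι ι ℍ) (k : ι) (y : ι → ℍ) : ι → ℍ :=
  fun i => if i = k ∧ (w *ᵥ y) i ≠ 0 then ‖(w *ᵥ y) i‖⁻¹ • (w *ᵥ y) i else y i

theorem hopfieldEnergy_eq_dotProduct (w : Matrix ι ι ℍ) (y : ι → ℍ) :
    hopfieldEnergy w y = -(1/2) * (star y ⬝ᵥ w *ᵥ y).re := by
  simp only [hopfieldEnergy, dotProduct, mulVec, Pi.star_apply, Finset.mul_sum, re_sum]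

theorem neg_half_sum_norm_le_hopfieldEnergy (w : Matrix ι ι ℍ) {y : ι → ℍ}
    (hy : ∀ i, ‖y i‖ = 1) : -(1/2) * ∑ i, ∑ j, ‖w i j‖ ≤ hopfieldEnergy w y := by
  have hterm (i j : ι) : (star (y i) * (w i j * y j)).re ≤ ‖w i j‖ :=
    calc (star (y i) * (w i j * y j)).re = ⟪y i, w i j * y j⟫_ℝ := re_star_mul_eq_inner _ _
      _ ≤ ‖y i‖ * ‖w i j * y j‖ := real_inner_le_norm _ _
      _ = ‖w i j‖ := by rw [norm_mul, hy, hy, one_mul, mul_one]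
  have := Finset.sum_le_sum fun i (_ : i ∈ Finset.univ) =>
    Finset.sum_le_sum fun j (_ : j ∈ Finset.univ) => hterm i j
  rw [hopfieldEnergy]
  linarith

variable {w : Matrix ι ι ℍ}

theorem hopfieldEnergy_add_single [DecidableEq ι] (hw : w.IsHermitian) (y : ι → ℍ) (k : ι)
    (d : ℍ) :
    hopfieldEnergy w (y + Pi.single k d) =
      hopfieldEnergy w y - ⟪d, (w *ᵥ y) k⟫_ℝ - ⟪d, w k k * d⟫_ℝ / 2 := by
  have hcross := hw.re_star_dotProduct_mulVec_comm y (Pi.single k d)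
  have hsingle (u : ι → ℍ) : star (Pi.single k d) ⬝ᵥ u = star d * u k := by
    rw [← Pi.single_star, single_dotProduct]
  have hdiag : (w *ᵥ Pi.single k d) k = w k k * d := by simp
  simp only [hopfieldEnergy_eq_dotProduct, star_add, mulVec_add, add_dotProduct, dotProduct_add,
    Quaternion.re_add, hcross, hsingle, hdiag, re_star_mul_eq_inner]
  ring

theorem hopfieldUpdate_apply_of_ne {k i : ι} (hi : i ≠ k) (y : ι → ℍ) :
    hopfieldUpdate w k y i = y i :=
  if_neg fun h => hi h.1

theorem hopfieldUpdate_eq_add_single [DecidableEq ι] (k : ι) (y : ι → ℍ) :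
    hopfieldUpdate w k y = y + Pi.single k (hopfieldUpdate w k y k - y k) := by
  funext i
  rcases eq_or_ne i k with rfl | hi
  · simp
  · simp [hopfieldUpdate_apply_of_ne hi, hi]

theorem hopfieldUpdate_eq_self_of_mulVec_eq_zero {k : ι} {y : ι → ℍ} (hv : (w *ᵥ y) k = 0) :
    hopfieldUpdate w k y = y :=
  funext fun _ => if_neg fun h => h.2 (h.1 ▸ hv)

theorem norm_hopfieldUpdate_apply {y : ι → ℍ} (hy : ∀ i, ‖y i‖ = 1) (k i : ι) :
    ‖hopfieldUpdate w k y i‖ = 1 := by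
  unfold hopfieldUpdate
  split_ifs with h
  exacts [norm_smul_inv_norm h.2, hy i]

theorem real_inner_hopfieldUpdate_sub_mulVec {k : ι} {y : ι → ℍ} (hy : ‖y k‖ = 1) :
    ⟪hopfieldUpdate w k y k - y k, (w *ᵥ y) k⟫_ℝ =
      ‖(w *ᵥ y) k‖ / 2 * ‖hopfieldUpdate w k y k - y k‖ ^ 2 := by
  rcases eq_or_ne ((w *ᵥ y) k) 0 with hv | hv
  · simp [hv]
  · rw [show hopfieldUpdate w k y k = _ from if_pos ⟨rfl, hv⟩]
    exact real_inner_inv_norm_smul_sub_eq hy _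

theorem hopfieldEnergy_hopfieldUpdate (hw : w.IsHermitian) {k : ι} {r : ℝ} (hr : w k k = r)
    {y : ι → ℍ} (hy : ‖y k‖ = 1) :
    hopfieldEnergy w (hopfieldUpdate w k y) = hopfieldEnergy w y -
      (‖(w *ᵥ y) k‖ + r) / 2 * ‖hopfieldUpdate w k y k - y k‖ ^ 2 := by
  classical
  have hcross := real_inner_hopfieldUpdate_sub_mulVec (w := w) hy
  set d := hopfieldUpdate w k y k - y k
  rw [hopfieldUpdate_eq_add_single, hopfieldEnergy_add_single hw, hcross, hr,
    inner_coe_mul_self]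
  ring

theorem hopfieldEnergy_hopfieldUpdate_le (hw : w.IsHermitian) {k : ι} {r : ℝ} (hr : w k k = r)
    (hr0 : 0 ≤ r) {y : ι → ℍ} (hy : ‖y k‖ = 1) :
    hopfieldEnergy w (hopfieldUpdate w k y) ≤ hopfieldEnergy w y := by
  rw [hopfieldEnergy_hopfieldUpdate hw hr hy, sub_le_self_iff]
  positivity

theorem hopfieldEnergy_hopfieldUpdate_lt (hw : w.IsHermitian) {k : ι} {r : ℝ} (hr : w k k = r)
    (hr0 : 0 ≤ r) {y : ι → ℍ} (hy : ‖y k‖ = 1) (hne : hopfieldUpdate w k y ≠ y) :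
    hopfieldEnergy w (hopfieldUpdate w k y) < hopfieldEnergy w y := by
  classical
  have hv : (w *ᵥ y) k ≠ 0 := fun hv => hne (hopfieldUpdate_eq_self_of_mulVec_eq_zero hv)
  have hd : hopfieldUpdate w k y k - y k ≠ 0 := fun hd => by
    rw [hopfieldUpdate_eq_add_single, hd, Pi.single_zero, add_zero] at hne
    exact hne rfl
  have := norm_pos_iff.2 hv
  have := norm_pos_iff.2 hd
  rw [hopfieldEnergy_hopfieldUpdate hw hr hy, sub_lt_self_iff]
  positivity

end Hopfield

theorem continuous_quaternionic_hopfield_energy_monotone_general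
    (N : ℕ)
    (w : Fin N → Fin N → Quaternion ℝ)
    (hsym : ∀ i j, w i j = star (w j i))
    (hdiag : ∀ i, ∃ r : ℝ, 0 ≤ r ∧ w i i = (r : Quaternion ℝ))
    (σ : ℕ → Fin N) (x : ℕ → Fin N → Quaternion ℝ)
    (hx0 : ∀ i, ‖x 0 i‖ = 1)
    (hdyn : ∀ t i,
      ((i = σ t ∧ (∑ j, w i j * x t j) ≠ 0) →
        x (t + 1) i = ‖(∑ j, w i j * x t j)‖⁻¹ • (∑ j, w i j * x t j)) ∧
      (¬(i = σ t ∧ (∑ j, w i j * x t j) ≠ 0) →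
        x (t + 1) i = x t i))
    (E : (Fin N → Quaternion ℝ) → ℝ)
    (hE : ∀ y, E y = -(1/2 : ℝ) * ∑ i, ∑ j, (star (y i) * (w i j * y j)).re) :
    (∀ t, E (x (t + 1)) ≤ E (x t)) ∧
    (∀ t, x (t + 1) ≠ x t → E (x (t + 1)) < E (x t)) ∧
    (∃ L : ℝ, Filter.Tendsto (fun t => E (x t)) Filter.atTop (nhds L)) := by
  have hw : Matrix.IsHermitian w := IsHermitian.ext fun i j => (hsym i j).symm
  have hstep (t : ℕ) : x (t + 1) = hopfieldUpdate w (σ t) (x t) := funext fun i => by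
    unfold hopfieldUpdate
    split_ifs with h
    exacts [(hdyn t i).1 h, (hdyn t i).2 h]
  have hsphere (t : ℕ) : ∀ i, ‖x t i‖ = 1 := by
    induction t with
    | zero => exact hx0
    | succ t ih => rw [hstep]; exact norm_hopfieldUpdate_apply ih _
  obtain rfl : E = hopfieldEnergy w := funext hE
  have hle (t : ℕ) : hopfieldEnergy w (x (t + 1)) ≤ hopfieldEnergy w (x t) := by
    obtain ⟨r, hr0, hr⟩ := hdiag (σ t)
    rw [hstep]
    exact hopfieldEnergy_hopfieldUpdate_le hw hr hr0 (hsphere t _)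
  refine ⟨hle, fun t hne => ?_, ?_⟩
  · obtain ⟨r, hr0, hr⟩ := hdiag (σ t)
    rw [hstep] at hne ⊢
    exact hopfieldEnergy_hopfieldUpdate_lt hw hr hr0 (hsphere t _) hne
  · have hbdd : BddBelow (Set.range fun t => hopfieldEnergy w (x t)) :=
      ⟨_, Set.forall_mem_range.2 fun t => neg_half_sum_norm_le_hopfieldEnergy w (hsphere t)⟩
    exact ⟨_, tendsto_atTop_ciInf (antitone_nat_of_succ_le hle) hbdd⟩

theorem continuous_quaternionic_hopfield_energy_monotone
    (N : ℕ) (hN : 1 ≤ N)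
    (w : Fin N → Fin N → Quaternion ℝ)
    (hsym : ∀ i j, w i j = star (w j i))
    (hdiag : ∀ i, ∃ r : ℝ, 0 ≤ r ∧ w i i = (r : Quaternion ℝ))
    (σ : ℕ → Fin N) (x : ℕ → Fin N → Quaternion ℝ)
    (hx0 : ∀ i, ‖x 0 i‖ = 1)
    (hdyn : ∀ t i,
      ((i = σ t ∧ (∑ j, w i j * x t j) ≠ 0) →
        x (t + 1) i = ‖(∑ j, w i j * x t j)‖⁻¹ • (∑ j, w i j * x t j)) ∧
      (¬(i = σ t ∧ (∑ j, w i j * x t j) ≠ 0) →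
        x (t + 1) i = x t i))
    (E : (Fin N → Quaternion ℝ) → ℝ)
    (hE : ∀ y, E y = -(1/2 : ℝ) * ∑ i, ∑ j, (star (y i) * (w i j * y j)).re) :
    (∀ t, E (x (t + 1)) ≤ E (x t)) ∧
    (∀ t, x (t + 1) ≠ x t → E (x (t + 1)) < E (x t)) ∧
    (∃ L : ℝ, Filter.Tendsto (fun t => E (x t)) Filter.atTop (nhds L)) :=
  continuous_quaternionic_hopfield_energy_monotone_general N w hsym hdiag σ x hx0 hdyn E hE
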